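/- Let g_1, g_2 be binary morphisms on X = {a,b} with g_1(a) = a^s, g_1(b) = a^{γ_1} b a^{α_1} ⋯ b a^{α_{p-1}} b a^{γ_2}, g_2(a) = a^t, g_2(b) = a^{δ_1} b a^{β_1} ⋯ b a^{β_{q-1}} b a^{δ_2}, where s,t ≥ 1, p,q ≥ 2 and all exponents are nonnegative. Assume p and q are multiplicatively independent, g_1(b) ∉ b*, and ω(g_1) = ω(g_2). Then s = t = 1 and γ_1 = γ_2 = δ_1 = δ_2 = 0. -/

import Mathlib

/-
Let `A n` be the number of `a`s between the `n`-th and `(n+1)`-th `b` of `ω(g₁)`. Iterating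
`g₁` on `b` shows `A (p n) = c + s A n` with `c = γ₁ + γ₂`, and `A n = α (n mod p)` for `p ∤ n`;
as the same word is `ω(g₂)`, also `A (q n) = d + t A n` with `d = δ₁ + δ₂`, and
`A n = β (n mod q)` for `q ∤ n`. Since `g₁(b) ∉ b*`, `A` is not identically zero, so along
`n = p ^ f n₀` it grows like `s ^ f` if `s ≥ 2`, like `f c` if `s = 1`, and it is bounded only if
`s = 1` and `c = 0`; symmetrically for `g₂`. Computing `A (p q)` both ways gives
`c + s d = d + t c`, so the two recursions are both bounded (which is the claim), both linear
or both exponential. In the last two cases comparing growth rates along `p ^ f` prime by prime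
gives `c v_r(q) = d v_r(p)`, resp. `s ^ v_r(q) = t ^ v_r(p)`, for every prime `r`, which makes
`p` and `q` multiplicatively dependent.
-/

/-- Words over the binary alphabet: `false` is the letter `a`, `true` is the letter `b`. -/
abbrev Word := List Bool

/-- The morphism of the free monoid determined by the images `g` of the letters. -/
def applyG (g : Bool → Word) (w : Word) : Word := w.flatMap g

/-- `a^n`. -/
def rep (n : ℕ) : Word := List.replicate n false

/-- `b a^{α 1} b a^{α 2} ⋯ b a^{α (p-1)} b`, a word with `p` occurrences of `b`. -/
def blockWord (p : ℕ) (α : ℕ → ℕ) : Word :=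
  ((List.range (p - 1)).flatMap fun i => true :: rep (α (i + 1))) ++ [true]

/-- `w^k`. -/
def wordPow (w : Word) (k : ℕ) : Word := (List.replicate k w).flatten

/-- `u` and `v` are `a`-conjugates. -/
def AConj (u v : Word) : Prop :=
  ∃ p q r s : ℕ, ∃ w : Word,
    u = rep p ++ w ++ rep q ∧ v = rep r ++ w ++ rep s ∧ p + q = r + s

/-- `w` is the infinite word `ω(g)`: for every `n`, the word obtained from `g^n(b)` by deleting
all occurrences of `a` preceding the first occurrence of `b` is a prefix of `w`. -/
def IsOmega (g : Bool → Word) (w : ℕ → Bool) : Prop :=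
  ∀ n k : ℕ, ∀ hk : k < (((applyG g)^[n] [true]).dropWhile (fun x => !x)).length,
    (((applyG g)^[n] [true]).dropWhile (fun x => !x)).get ⟨k, hk⟩ = w k

/-- `Aw w i` (for `i ≥ 1`): the number of occurrences of `a` in `w` strictly between the
`i`-th and `(i+1)`-th occurrences of `b` in `w`. -/
noncomputable def Aw (w : ℕ → Bool) (i : ℕ) : ℕ :=
  Nat.nth (fun n => w n = true) i - Nat.nth (fun n => w n = true) (i - 1) - 1

theorem le_of_forall_mul_le_mul_add {x y C : ℕ} (h : ∀ f, f * x ≤ f * y + C) : x ≤ y := by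
  by_contra! hxy
  nlinarith [h (C + 1)]

theorem le_of_forall_pow_le_mul_pow {x y C : ℕ} (h : ∀ f, x ^ f ≤ C * y ^ f) : x ≤ y := by
  by_contra! hxy
  have hy : 0 < y := by
    by_contra! hy0
    have := h 1
    simp_all
  have hratio : (1 : ℝ) < x / y := by
    rw [one_lt_div (by positivity)]; exact_mod_cast hxy
  obtain ⟨f, hf⟩ :=
    ((tendsto_pow_atTop_atTop_of_one_lt hratio).eventually_gt_atTop (C : ℝ)).exists
  have hle : ((x : ℝ) / y) ^ f ≤ C := by
    rw [div_pow, div_le_iff₀ (by positivity)]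
    exact_mod_cast h f
  linarith

theorem factorization_mul_le_of_pow_dvd {p q n e f : ℕ} (hp : p ≠ 0) (hq : q ≠ 0)
    (hn : n ≠ 0) (hdvd : q ^ e ∣ p ^ f * n) (r : ℕ) :
    e * q.factorization r ≤ f * p.factorization r + n.factorization r := by
  have := (Nat.factorization_le_iff_dvd (pow_ne_zero e hq) (by positivity)).2 hdvd r
  simpa [Nat.factorization_mul (pow_ne_zero f hp) hn, Nat.factorization_pow] using this

theorem pow_eq_pow_of_forall_mul_factorization_eq {p q i j : ℕ} (hp : p ≠ 0) (hq : q ≠ 0)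
    (h : ∀ r, i * p.factorization r = j * q.factorization r) : p ^ i = q ^ j :=
  Nat.eq_of_factorization_eq (pow_ne_zero i hp) (pow_ne_zero j hq) fun r => by
    simpa [Nat.factorization_pow] using h r

theorem exists_pow_eq_pow_of_forall_pow_factorization_eq {p q s t : ℕ} (hp : p ≠ 0)
    (hq : 2 ≤ q) (ht : 2 ≤ t)
    (h : ∀ r, s ^ q.factorization r = t ^ p.factorization r) :
    ∃ i j, 0 < i ∧ p ^ i = q ^ j := by
  obtain ⟨r₀, hr₀, hr₀q⟩ := Nat.exists_prime_and_dvd (show q ≠ 1 by omega)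
  have hV₀ : 0 < q.factorization r₀ := hr₀.factorization_pos_of_dvd (by omega) hr₀q
  refine ⟨q.factorization r₀, p.factorization r₀, hV₀,
    pow_eq_pow_of_forall_mul_factorization_eq hp (by omega) fun r => ?_⟩
  apply Nat.pow_right_injective ht
  calc t ^ (q.factorization r₀ * p.factorization r)
      = (s ^ q.factorization r) ^ q.factorization r₀ := by rw [h, ← pow_mul, mul_comm]
    _ = (s ^ q.factorization r₀) ^ q.factorization r := by rw [← pow_mul, ← pow_mul, mul_comm]
    _ = t ^ (p.factorization r₀ * q.factorization r) := by rw [h, ← pow_mul]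

structure IsGapSequence (A : ℕ → ℕ) (p s c : ℕ) : Prop where
  one_lt : 1 < p
  apply_mul : ∀ n, 0 < n → A (p * n) = c + s * A n
  exists_bound : ∃ M, ∀ n, ¬ p ∣ n → A n ≤ M

namespace IsGapSequence

variable {A : ℕ → ℕ} {p s c q t d : ℕ}

theorem congr {B : ℕ → ℕ} (hA : IsGapSequence A p s c) (h : ∀ n, 0 < n → A n = B n) :
    IsGapSequence B p s c where
  one_lt := hA.one_lt
  apply_mul n hn := by
    rw [← h n hn, ← h _ (Nat.mul_pos (by linarith [hA.one_lt]) hn), hA.apply_mul n hn]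
  exists_bound := by
    obtain ⟨M, hM⟩ := hA.exists_bound
    exact ⟨M, fun n hn => h n (Nat.pos_of_ne_zero (by rintro rfl; simp at hn)) ▸ hM n hn⟩

theorem pow_mul_le (hA : IsGapSequence A p s c) {n : ℕ} (hn : 0 < n) (f : ℕ) :
    s ^ f * A n ≤ A (p ^ f * n) := by
  induction f with
  | zero => simp
  | succ f ih =>
    have hpos : 0 < p ^ f * n := by have := hA.one_lt; positivity
    rw [pow_succ' s, pow_succ' p, mul_assoc, mul_assoc, hA.apply_mul _ hpos]
    nlinarith

theorem add_mul_le (hA : IsGapSequence A p s c) (hs : 1 ≤ s) {n : ℕ} (hn : 0 < n) (f : ℕ) :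
    A n + f * c ≤ A (p ^ f * n) := by
  induction f with
  | zero => simp
  | succ f ih =>
    have hpos : 0 < p ^ f * n := by have := hA.one_lt; positivity
    rw [pow_succ', mul_assoc, hA.apply_mul _ hpos]
    nlinarith

theorem apply_pow_mul_of_eq_one (hA : IsGapSequence A p 1 c) {m : ℕ} (hm : 0 < m) (e : ℕ) :
    A (p ^ e * m) = A m + e * c := by
  induction e with
  | zero => simp
  | succ e ih =>
    have hpos : 0 < p ^ e * m := by have := hA.one_lt; positivity
    rw [pow_succ', mul_assoc, hA.apply_mul _ hpos, ih]
    ring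

theorem apply_pow_mul_add_le (hA : IsGapSequence A p s c) (hs : 2 ≤ s) {m : ℕ} (hm : 0 < m)
    (e : ℕ) : A (p ^ e * m) + c ≤ s ^ e * (A m + c) := by
  induction e with
  | zero => simp
  | succ e ih =>
    have hpos : 0 < p ^ e * m := by have := hA.one_lt; positivity
    rw [pow_succ', mul_assoc, hA.apply_mul _ hpos, pow_succ', mul_assoc]
    nlinarith

theorem exists_pow_mul_bound (hA : IsGapSequence A p s c) :
    ∃ M, ∀ n, 0 < n → ∃ e m, 0 < m ∧ A m ≤ M ∧ n = p ^ e * m := by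
  obtain ⟨M, hM⟩ := hA.exists_bound
  refine ⟨M, fun n hn => ?_⟩
  obtain ⟨e, m, hm, rfl⟩ := Nat.exists_eq_pow_mul_and_not_dvd hn.ne' p hA.one_lt.ne'
  exact ⟨e, m, Nat.pos_of_ne_zero (by rintro rfl; simp at hm), hM m hm, rfl⟩

theorem add_mul_eq_add_mul (hA : IsGapSequence A p s c) (hB : IsGapSequence A q t d) :
    c + s * d = d + t * c := by
  have hp := hA.one_lt
  have hq := hB.one_lt
  have hpq := hA.apply_mul q (by omega)
  have hqp := hB.apply_mul p (by omega)
  have hp1 := hA.apply_mul 1 one_pos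
  have hq1 := hB.apply_mul 1 one_pos
  rw [mul_one] at hp1 hq1
  rw [mul_comm, hq1] at hpq
  rw [hp1] at hqp
  linarith

theorem exists_bound_iff (hA : IsGapSequence A p s c) (hs : 1 ≤ s)
    (hpos : ∃ n, 0 < n ∧ 0 < A n) :
    (∃ M, ∀ n, 0 < n → A n ≤ M) ↔ s = 1 ∧ c = 0 := by
  constructor
  · rintro ⟨M, hM⟩
    obtain ⟨n₀, hn₀, hA₀⟩ := hpos
    have hp := hA.one_lt
    refine ⟨?_, ?_⟩
    · by_contra hs1
      have := (hA.pow_mul_le hn₀ M).trans (hM _ (by positivity))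
      have h2 : 2 ^ M ≤ s ^ M := Nat.pow_le_pow_left (by omega) M
      nlinarith [Nat.lt_two_pow_self (n := M)]
    · by_contra hc
      have := (hA.add_mul_le hs one_pos (M + 1)).trans (hM _ (by positivity))
      nlinarith [Nat.one_le_iff_ne_zero.2 hc]
  · rintro ⟨rfl, rfl⟩
    obtain ⟨M, hM⟩ := hA.exists_pow_mul_bound
    refine ⟨M, fun n hn => ?_⟩
    obtain ⟨e, m, hm, hAm, rfl⟩ := hM n hn
    simpa [hA.apply_pow_mul_of_eq_one hm e] using hAm


theorem mul_factorization_le (hA : IsGapSequence A p 1 c) (hB : IsGapSequence A q 1 d)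
    (r : ℕ) : c * q.factorization r ≤ d * p.factorization r := by
  have hp := hA.one_lt
  have hq := hB.one_lt
  obtain ⟨M, hM⟩ := hB.exists_pow_mul_bound
  refine le_of_forall_mul_le_mul_add (C := M * q.factorization r) fun f => ?_
  obtain ⟨e, m, hm, hAm, hfm⟩ := hM (p ^ f * 1) (by positivity)
  have hlow := hA.add_mul_le le_rfl one_pos f
  have hval := factorization_mul_le_of_pow_dvd (by omega) (by omega) one_ne_zero
    (Dvd.intro m hfm.symm) r
  rw [hfm, hB.apply_pow_mul_of_eq_one hm] at hlow
  simp only [Nat.factorization_one, Finsupp.coe_zero, Pi.zero_apply, add_zero] at hval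
  calc f * (c * q.factorization r) = (f * c) * q.factorization r := by ring
    _ ≤ (M + e * d) * q.factorization r := by gcongr; omega
    _ = d * (e * q.factorization r) + M * q.factorization r := by ring
    _ ≤ d * (f * p.factorization r) + M * q.factorization r := by gcongr
    _ = f * (d * p.factorization r) + M * q.factorization r := by ring

theorem pow_factorization_le (hA : IsGapSequence A p s c) (hB : IsGapSequence A q t d)
    (ht : 2 ≤ t) {n₀ : ℕ} (hn₀ : 0 < n₀) (hA₀ : 0 < A n₀) (r : ℕ) :
    s ^ q.factorization r ≤ t ^ p.factorization r := by
  have hp := hA.one_lt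
  have hq := hB.one_lt
  obtain ⟨M, hM⟩ := hB.exists_pow_mul_bound
  set V := q.factorization r
  set P := p.factorization r
  set D := n₀.factorization r
  refine le_of_forall_pow_le_mul_pow (C := t ^ D * (M + d) ^ V) fun f => ?_
  obtain ⟨e, m, hm, hAm, hfm⟩ := hM (p ^ f * n₀) (by positivity)
  have hval : e * V ≤ f * P + D := factorization_mul_le_of_pow_dvd (by omega) (by omega)
    hn₀.ne' (Dvd.intro m hfm.symm) r
  have hup : s ^ f ≤ t ^ e * (M + d) :=
    calc s ^ f ≤ s ^ f * A n₀ := Nat.le_mul_of_pos_right _ hA₀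
      _ ≤ A (q ^ e * m) + d := hfm ▸ (hA.pow_mul_le hn₀ f).trans (Nat.le_add_right _ _)
      _ ≤ t ^ e * (A m + d) := hB.apply_pow_mul_add_le ht hm e
      _ ≤ t ^ e * (M + d) := by gcongr
  calc (s ^ V) ^ f = (s ^ f) ^ V := by rw [← pow_mul, ← pow_mul, mul_comm]
    _ ≤ (t ^ e * (M + d)) ^ V := by gcongr
    _ = t ^ (e * V) * (M + d) ^ V := by rw [mul_pow, pow_mul]
    _ ≤ t ^ (f * P + D) * (M + d) ^ V := by gcongr; omega
    _ = t ^ D * (M + d) ^ V * (t ^ P) ^ f := by rw [pow_add, mul_comm f P, pow_mul]; ring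

theorem eq_one_of_mulIndependent (hA : IsGapSequence A p s c) (hB : IsGapSequence A q t d)
    (hs : 1 ≤ s) (ht : 1 ≤ t) (hind : ∀ i j : ℕ, p ^ i = q ^ j → i = 0 ∧ j = 0)
    (hpos : ∃ n, 0 < n ∧ 0 < A n) :
    s = 1 ∧ c = 0 ∧ t = 1 ∧ d = 0 := by
  have hp := hA.one_lt
  have hq := hB.one_lt
  have hdeg : s = 1 ∧ c = 0 ↔ t = 1 ∧ d = 0 :=
    (hA.exists_bound_iff hs hpos).symm.trans (hB.exists_bound_iff ht hpos)
  by_cases hsc : s = 1 ∧ c = 0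
  · exact ⟨hsc.1, hsc.2, hdeg.1 hsc⟩
  exfalso
  have htd : ¬ (t = 1 ∧ d = 0) := hdeg.not.1 hsc
  have hcomm := hA.add_mul_eq_add_mul hB
  obtain ⟨rfl, rfl⟩ | ⟨hs2, ht2⟩ : (s = 1 ∧ t = 1) ∨ (2 ≤ s ∧ 2 ≤ t) := by
    rcases Nat.lt_or_ge s 2 with hs1 | hs2
    · obtain rfl : s = 1 := by omega
      have hc : 0 < c := by omega
      exact Or.inl ⟨rfl, Nat.eq_of_mul_eq_mul_right hc (by linarith)⟩
    · refine Or.inr ⟨hs2, ?_⟩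
      by_contra ht1
      obtain rfl : t = 1 := by omega
      have hd : 0 < d := by omega
      have := Nat.eq_of_mul_eq_mul_right hd (show s * d = 1 * d by linarith)
      omega
  · have heq : ∀ r, d * p.factorization r = c * q.factorization r := fun r =>
      le_antisymm (hB.mul_factorization_le hA r) (hA.mul_factorization_le hB r)
    have := hind d c (pow_eq_pow_of_forall_mul_factorization_eq (by omega) (by omega) heq)
    omega
  · obtain ⟨n₀, hn₀, hA₀⟩ := hpos
    obtain ⟨i, j, hi, hij⟩ := exists_pow_eq_pow_of_forall_pow_factorization_eq (by omega) hq ht2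
      fun r => le_antisymm (hA.pow_factorization_le hB ht2 hn₀ hA₀ r)
        (hB.pow_factorization_le hA hs2 hn₀ hA₀ r)
    exact hi.ne' (hind i j hij).1

end IsGapSequence

theorem rep_add (x y : ℕ) : rep (x + y) = rep x ++ rep y := List.replicate_add x y false

theorem applyG_append (g : Bool → Word) (u v : Word) :
    applyG g (u ++ v) = applyG g u ++ applyG g v := List.flatMap_append

theorem applyG_rep {g : Bool → Word} {s : ℕ} (ha : g false = rep s) (k : ℕ) :
    applyG g (rep k) = rep (s * k) := by
  induction k with
  | zero => rfl
  | succ k ih =>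
    rw [rep, List.replicate_succ', ← rep, applyG_append, ih, mul_add_one, rep_add]
    simp [applyG, ha]

-- `b a^(F 1) b a^(F 2) ⋯ b a^(F m) b`
def gapWord (F : ℕ → ℕ) (m : ℕ) : Word :=
  ((List.range m).flatMap fun i => true :: rep (F (i + 1))) ++ [true]

theorem blockWord_eq_gapWord (p : ℕ) (α : ℕ → ℕ) : blockWord p α = gapWord α (p - 1) := rfl

theorem gapWord_succ (F : ℕ → ℕ) (m : ℕ) :
    gapWord F (m + 1) = gapWord F m ++ rep (F (m + 1)) ++ [true] := by
  simp [gapWord, List.range_succ]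

theorem gapWord_congr {F G : ℕ → ℕ} {m : ℕ} (h : ∀ j, 0 < j → j ≤ m → F j = G j) :
    gapWord F m = gapWord G m := by
  unfold gapWord
  congr 1
  refine List.flatMap_congr fun i hi => ?_
  rw [h (i + 1) i.succ_pos (List.mem_range.1 hi)]

theorem gapWord_append (F : ℕ → ℕ) (m k : ℕ) :
    gapWord F m ++ rep (F (m + 1)) ++ gapWord (fun i => F (m + 1 + i)) k
      = gapWord F (m + 1 + k) := by
  induction k with
  | zero => rw [add_zero, gapWord_succ]; rfl
  | succ k ih => rw [gapWord_succ, ← add_assoc, gapWord_succ, ← ih]; simp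

theorem gapWord_prefix (F : ℕ → ℕ) {m n : ℕ} (h : m ≤ n) : gapWord F m <+: gapWord F n := by
  induction n, h using Nat.le_induction with
  | base => exact List.prefix_refl _
  | succ n _ ih =>
    rw [gapWord_succ, List.append_assoc]
    exact ih.trans (List.prefix_append _ _)

theorem gapWord_eq_cons (F : ℕ → ℕ) (m : ℕ) : ∃ l, gapWord F m = true :: l := by
  cases m <;> simp [gapWord, List.range_succ_eq_map]

theorem gapWord_zero (m : ℕ) : gapWord (fun _ => 0) m = List.replicate (m + 1) true := by
  induction m with
  | zero => rfl
  | succ m ih => rw [gapWord_succ, ih, List.replicate_succ' (n := m + 1)]; simp [rep]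

/-- The gaps between consecutive `b`s of `ω(g)` when `g(a) = a^s` and
`g(b) = a^γ₁ (blockWord p α) a^γ₂`, with `c = γ₁ + γ₂`. -/
def gapFun (p s c : ℕ) (α : ℕ → ℕ) (j : ℕ) : ℕ :=
  if h : 0 < j ∧ p ∣ j ∧ 1 < p then
    have : j / p < j := Nat.div_lt_self h.1 h.2.2
    c + s * gapFun p s c α (j / p)
  else α (j % p)

section gapFun

variable {p s c : ℕ} {α : ℕ → ℕ}

theorem gapFun_mul (hp : 1 < p) {k : ℕ} (hk : 0 < k) :
    gapFun p s c α (p * k) = c + s * gapFun p s c α k := by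
  rw [gapFun, dif_pos ⟨by positivity, dvd_mul_right p k, hp⟩]
  simp only [Nat.mul_div_cancel_left k (show 0 < p by omega)]

theorem gapFun_mul_add {i : ℕ} (hi : 0 < i) (hip : i < p) (k : ℕ) :
    gapFun p s c α (p * k + i) = α i := by
  have hndvd : ¬ p ∣ p * k + i := fun h =>
    Nat.not_dvd_of_pos_of_lt hi hip ((Nat.dvd_add_right (dvd_mul_right p k)).1 h)
  rw [gapFun, dif_neg (fun h => hndvd h.2.1), add_comm, Nat.add_mul_mod_self_left,
    Nat.mod_eq_of_lt hip]

theorem isGapSequence_gapFun (hp : 1 < p) : IsGapSequence (gapFun p s c α) p s c where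
  one_lt := hp
  apply_mul _ := gapFun_mul hp
  exists_bound := ⟨(Finset.range p).sup α, fun n hn => by
    rw [gapFun, dif_neg (fun h => hn h.2.1)]
    exact Finset.le_sup (Finset.mem_range.2 (Nat.mod_lt n (by omega)))⟩

end gapFun

section Morphism

variable {g : Bool → Word} {p s γ₁ γ₂ : ℕ} {α : ℕ → ℕ}

theorem applyG_gapWord (hp : 1 < p) (ha : g false = rep s)
    (hb : g true = rep γ₁ ++ blockWord p α ++ rep γ₂) (m : ℕ) :
    applyG g (gapWord (gapFun p s (γ₁ + γ₂) α) m)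
      = rep γ₁ ++ gapWord (gapFun p s (γ₁ + γ₂) α) (p * m + (p - 1)) ++ rep γ₂ := by
  set F := gapFun p s (γ₁ + γ₂) α
  have hblock (k : ℕ) : blockWord p α = gapWord (fun i => F (p * k + i)) (p - 1) :=
    (blockWord_eq_gapWord p α).trans <|
      gapWord_congr fun i hi hip => (gapFun_mul_add (p := p) hi (by omega) k).symm
  have hb' : applyG g [true] = g true := List.flatMap_singleton _ _
  induction m with
  | zero =>
    have hblock₀ : blockWord p α = gapWord F (p - 1) := by simpa using hblock 0
    rw [mul_zero, zero_add, ← hblock₀, ← hb]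
    exact hb'
  | succ m ih =>
    have hN : p * m + (p - 1) + 1 = p * (m + 1) := by rw [mul_add_one]; omega
    have hF : F (p * (m + 1)) = γ₁ + γ₂ + s * F (m + 1) := gapFun_mul hp m.succ_pos
    have hgap : rep γ₂ ++ rep (s * F (m + 1)) ++ rep γ₁ = rep (F (p * m + (p - 1) + 1)) := by
      rw [hN, hF, ← rep_add, ← rep_add]
      ring_nf
    rw [gapWord_succ, applyG_append, applyG_append, ih, applyG_rep ha, hb', hb, hblock (m + 1),
      ← hN, ← gapWord_append, ← hgap]
    simp only [List.append_assoc]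

theorem iterate_applyG_singleton (hp : 1 < p) (ha : g false = rep s)
    (hb : g true = rep γ₁ ++ blockWord p α ++ rep γ₂) (n : ℕ) :
    ∃ x y, (applyG g)^[n] [true]
      = rep x ++ gapWord (gapFun p s (γ₁ + γ₂) α) (p ^ n - 1) ++ rep y := by
  induction n with
  | zero => exact ⟨0, 0, rfl⟩
  | succ n ih =>
    obtain ⟨x, y, h⟩ := ih
    have hexp : p * (p ^ n - 1) + (p - 1) = p ^ (n + 1) - 1 := by
      have := Nat.one_le_pow n p (by omega)
      rw [Nat.mul_sub_one, pow_succ']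
      have := Nat.le_mul_of_pos_right p this
      omega
    refine ⟨s * x + γ₁, γ₂ + s * y, ?_⟩
    rw [Function.iterate_succ_apply', h, applyG_append, applyG_append, applyG_rep ha,
      applyG_rep ha, applyG_gapWord hp ha hb, hexp, rep_add, rep_add]
    simp only [List.append_assoc]

end Morphism

def IsPrefixOfSeq (l : Word) (w : ℕ → Bool) : Prop :=
  ∀ k (hk : k < l.length), l[k] = w k

theorem IsPrefixOfSeq.of_prefix {u v : Word} {w : ℕ → Bool} (h : IsPrefixOfSeq v w)
    (huv : u <+: v) : IsPrefixOfSeq u w :=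
  fun k hk => (huv.getElem hk).trans (h k _)

theorem eq_of_isPrefixOfSeq_rep_append {l : Word} {w : ℕ → Bool} {x y : ℕ}
    (hx : IsPrefixOfSeq (l ++ rep x ++ [true]) w)
    (hy : IsPrefixOfSeq (l ++ rep y ++ [true]) w) : x = y := by
  wlog hxy : x < y generalizing x y
  · rcases Nat.lt_or_ge y x with h | h
    · exact (this hy hx h).symm
    · omega
  have h₁ := hx (l.length + x) (by simp [rep])
  have h₂ := hy (l.length + x) (by simp [rep]; omega)
  simp [rep, List.getElem_append_right, hxy] at h₁ h₂
  simp [h₁] at h₂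

theorem dropWhile_rep_append (x : ℕ) (l : Word) :
    (rep x ++ true :: l).dropWhile (fun b => !b) = true :: l := by
  simp [rep]

theorem isPrefixOfSeq_gapWord {g : Bool → Word} {p s γ₁ γ₂ : ℕ} {α : ℕ → ℕ} {w : ℕ → Bool}
    (hp : 1 < p) (ha : g false = rep s) (hb : g true = rep γ₁ ++ blockWord p α ++ rep γ₂)
    (hw : IsOmega g w) (m : ℕ) : IsPrefixOfSeq (gapWord (gapFun p s (γ₁ + γ₂) α) m) w := by
  set F := gapFun p s (γ₁ + γ₂) α
  obtain ⟨x, y, hit⟩ := iterate_applyG_singleton hp ha hb m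
  obtain ⟨l, hl⟩ := gapWord_eq_cons F (p ^ m - 1)
  have hdrop : ((applyG g)^[m] [true]).dropWhile (fun b => !b)
      = gapWord F (p ^ m - 1) ++ rep y := by
    rw [hit, hl, List.append_assoc, List.cons_append, dropWhile_rep_append]
  have hpre : IsPrefixOfSeq (gapWord F (p ^ m - 1) ++ rep y) w := by
    have := hw m
    simp only [hdrop, List.get_eq_getElem] at this
    exact this
  have hm : m ≤ p ^ m - 1 := by have := Nat.lt_pow_self (n := m) hp; omega
  exact hpre.of_prefix ((gapWord_prefix F hm).trans (List.prefix_append _ _))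

theorem eq_of_isPrefixOfSeq_gapWord {F G : ℕ → ℕ} {w : ℕ → Bool}
    (hF : ∀ m, IsPrefixOfSeq (gapWord F m) w) (hG : ∀ m, IsPrefixOfSeq (gapWord G m) w)
    (n : ℕ) (hn : 0 < n) : F n = G n := by
  induction n using Nat.strong_induction_on with
  | _ n ih =>
    obtain ⟨j, rfl⟩ : ∃ j, n = j + 1 := ⟨n - 1, by omega⟩
    have hFG : gapWord G j = gapWord F j :=
      gapWord_congr fun i hi hij => (ih i (by omega) hi).symm
    have hFj := hF (j + 1)
    have hGj := hG (j + 1)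
    rw [gapWord_succ] at hFj hGj
    rw [hFG] at hGj
    exact eq_of_isPrefixOfSeq_rep_append hFj hGj

theorem blockWord_eq_replicate {p s γ₁ γ₂ : ℕ} {α : ℕ → ℕ} (hp : 1 < p)
    (h : ∀ n, 0 < n → gapFun p s (γ₁ + γ₂) α n = 0) :
    rep γ₁ ++ blockWord p α ++ rep γ₂ = List.replicate p true := by
  have hc : γ₁ + γ₂ = 0 := by
    have := h (p * 1) (by omega)
    rwa [gapFun_mul hp one_pos, h 1 one_pos, mul_zero, add_zero] at this
  have hα : blockWord p α = gapWord (fun _ => 0) (p - 1) :=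
    (blockWord_eq_gapWord p α).trans <| gapWord_congr fun i hi hip => by
      have := gapFun_mul_add (p := p) (s := s) (c := γ₁ + γ₂) (α := α) hi (by omega) 0
      rwa [mul_zero, zero_add, h i hi, eq_comm] at this
  obtain ⟨rfl, rfl⟩ : γ₁ = 0 ∧ γ₂ = 0 := by omega
  simp [hα, gapWord_zero, Nat.sub_add_cancel hp.le, rep]

/-- if `p`, `q` are multiplicatively independent, `g₁(b) ∉ b*` and
`ω(g₁) = ω(g₂)`, then `s = t = 1` and `γ₁ = γ₂ = δ₁ = δ₂ = 0`. -/
theorem stmt10 (s t : ℕ) (hs : 1 ≤ s) (ht : 1 ≤ t)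
    (p q : ℕ) (hp : 2 ≤ p) (hq : 2 ≤ q)
    (γ₁ γ₂ δ₁ δ₂ : ℕ) (α β : ℕ → ℕ)
    (g₁ g₂ : Bool → Word)
    (h₁a : g₁ false = rep s)
    (h₁b : g₁ true = rep γ₁ ++ blockWord p α ++ rep γ₂)
    (h₂a : g₂ false = rep t)
    (h₂b : g₂ true = rep δ₁ ++ blockWord q β ++ rep δ₂)
    (hind : ∀ i j : ℕ, p ^ i = q ^ j → i = 0 ∧ j = 0)
    (hnb : ¬ ∃ k : ℕ, g₁ true = List.replicate k true)
    (homega : ∃ w : ℕ → Bool, IsOmega g₁ w ∧ IsOmega g₂ w) :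
    s = 1 ∧ t = 1 ∧ γ₁ = 0 ∧ γ₂ = 0 ∧ δ₁ = 0 ∧ δ₂ = 0 := by
  obtain ⟨w, hw₁, hw₂⟩ := homega
  set F := gapFun p s (γ₁ + γ₂) α
  have hA : IsGapSequence F p s (γ₁ + γ₂) := isGapSequence_gapFun hp
  have hB : IsGapSequence F q t (δ₁ + δ₂) :=
    (isGapSequence_gapFun hq).congr <| eq_of_isPrefixOfSeq_gapWord
      (isPrefixOfSeq_gapWord hq h₂a h₂b hw₂) (isPrefixOfSeq_gapWord hp h₁a h₁b hw₁)
  have hpos : ∃ n, 0 < n ∧ 0 < F n := by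
    by_contra! h
    exact hnb ⟨p, h₁b.trans (blockWord_eq_replicate hp fun n hn => Nat.le_zero.1 (h n hn))⟩
  obtain ⟨hs1, hc, ht1, hd⟩ := hA.eq_one_of_mulIndependent hB hs ht hind hpos
  omega
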